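/- arXiv:1809.00865 — 2 statements merged into one kernel-verified Lean document; each statement's English description precedes it below -/
import Mathlib

section
/- Let k be a field, P a prime ideal in k[x_1,...,x_n], and C ⊆ {x_1,...,x_n} a set of variables such that P ∩ k[C] ≠ ⟨0⟩ but P ∩ k[C'] = ⟨0⟩ for every proper subset C' ⊊ C. Then the ideal P ∩ k[C] of k[C] is principal, generated by an irreducible polynomial f_C, and every variable of C appears in f_C. -/
open MvPolynomial

/-!
Minimality of `C` means that every nonzero `g ∈ P ∩ k[C]` involves all variables of `C`. Take
for `f_C` a prime factor lying in `P` of some nonzero element of `P ∩ k[C]`. Fix `x ∈ C` and view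
`k[C]` as `k[C ∖ {x}][x]`: `f_C` is then irreducible of positive degree, so by Gauss's lemma
it stays irreducible over the fraction field. If `f_C ∤ g` for some `g ∈ P ∩ k[C]`, the two are
coprime there, and their resultant is a nonzero element of `P ∩ k[C ∖ {x}]`, which minimality
rules out.
-/

namespace Polynomial

variable {R : Type*} [CommRing R] [IsDomain R] [IsGCDMonoid R]

theorem resultant_ne_zero_of_irreducible_of_not_dvd {p g : R[X]} (hp : Irreducible p)
    (hdeg : p.natDegree ≠ 0) (hpg : ¬p ∣ g) : p.resultant g ≠ 0 := by
  let K := FractionRing R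
  have hinj := IsFractionRing.injective R K
  have hprim := hp.isPrimitive hdeg
  have hirr : Irreducible (p.map (algebraMap R K)) :=
    hprim.irreducible_iff_irreducible_map_fraction_map.mp hp
  have hcop : IsCoprime (p.map (algebraMap R K)) (g.map (algebraMap R K)) :=
    (EuclideanDomain.dvd_or_coprime _ _ hirr).resolve_left
      fun h => hpg (hprim.dvd_of_fraction_map_dvd_fraction_map h)
  have := resultant_ne_zero _ _ hcop
  rwa [natDegree_map_eq_of_injective hinj, natDegree_map_eq_of_injective hinj, resultant_map_map,
    map_ne_zero_iff _ hinj] at this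

theorem dvd_of_mem_of_comap_C_eq_bot {I : Ideal R[X]} (hI : I.comap C = ⊥) {p g : R[X]}
    (hp : Irreducible p) (hdeg : p.natDegree ≠ 0) (hpI : p ∈ I) (hgI : g ∈ I) : p ∣ g := by
  by_contra hpg
  obtain ⟨a, b, -, -, hab⟩ := exists_mul_add_mul_eq_C_resultant p g le_rfl le_rfl (.inl hdeg)
  have hres : p.resultant g ∈ I.comap C := by
    rw [Ideal.mem_comap, ← hab]
    exact I.add_mem (I.mul_mem_right _ hpI) (I.mul_mem_right _ hgI)
  rw [hI, Ideal.mem_bot] at hres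
  exact resultant_ne_zero_of_irreducible_of_not_dvd hp hdeg hpg hres

end Polynomial

namespace MvPolynomial

variable {σ τ R : Type*} [CommRing R]

theorem mem_vars_rename_iff {f : σ → τ} (hf : Function.Injective f) {p : MvPolynomial σ R}
    {i : σ} : f i ∈ (rename f p).vars ↔ i ∈ p.vars := by
  rw [mem_vars_iff_degreeOf_ne_zero, degreeOf_rename_of_injective hf,
    mem_vars_iff_degreeOf_ne_zero]

theorem vars_nonempty_of_not_isUnit {k : Type*} [Field k] {p : MvPolynomial σ k} (hp : p ≠ 0)
    (hu : ¬IsUnit p) : p.vars.Nonempty := by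
  rw [Finset.nonempty_iff_ne_empty, Ne, vars_eq_empty_iff_eq_C]
  intro hpC
  have hc : p.coeff 0 ≠ 0 := fun h0 => hp (by rw [hpC, h0, map_zero])
  exact hu (by rw [hpC]; exact (isUnit_iff_ne_zero.mpr hc).map C)

variable [IsDomain R]

theorem vars_subset_of_dvd {p q : MvPolynomial σ R} (h : p ∣ q) (hq : q ≠ 0) :
    p.vars ⊆ q.vars := by
  obtain ⟨r, rfl⟩ := h
  intro i hi
  rw [mem_vars_iff_degreeOf_ne_zero] at hi ⊢
  rw [degreeOf_mul_eq (left_ne_zero_of_mul hq) (right_ne_zero_of_mul hq)]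
  omega

theorem irreducible_rename {f : σ → τ} (hf : Function.Injective f) {p : MvPolynomial σ R}
    (hp : Irreducible p) : Irreducible (rename f p) := by
  classical
  have hdvd : ∀ u, u ∣ rename f p → ∃ u', rename f u' = u := fun u hu =>
    exists_rename_eq_of_vars_subset_range u f hf fun i hi => by
      obtain ⟨j, -, rfl⟩ := mem_vars_rename f p
        (vars_subset_of_dvd hu ((map_ne_zero_iff _ (rename_injective f hf)).mpr hp.ne_zero) hi)
      exact ⟨j, rfl⟩
  refine ⟨fun h => hp.not_isUnit (by simpa [killCompl_rename_app hf] using h.map (killCompl hf)),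
    fun u v huv => ?_⟩
  obtain ⟨u', rfl⟩ := hdvd u (Dvd.intro v huv.symm)
  obtain ⟨v', rfl⟩ := hdvd v (Dvd.intro_left _ huv.symm)
  rw [← map_mul] at huv
  exact (hp.isUnit_or_isUnit (rename_injective f hf huv)).imp (·.map _) (·.map _)

theorem dvd_of_mem_of_forall_mem_vars [UniqueFactorizationMonoid R]
    {I : Ideal (MvPolynomial σ R)} (x : σ) (hI : ∀ r ∈ I, x ∉ r.vars → r = 0)
    {q g : MvPolynomial σ R} (hq : Irreducible q) (hqI : q ∈ I) (hgI : g ∈ I) : q ∣ g := by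
  classical
  let e : MvPolynomial σ R ≃ₐ[R] Polynomial (MvPolynomial {b // b ≠ x} R) :=
    (renameEquiv R (Equiv.optionSubtypeNe x).symm).trans (optionEquivLeft R _)
  have he : ∀ r, e.symm (Polynomial.C r) = rename Subtype.val r := by
    suffices e.symm.toAlgHom.comp Polynomial.CAlgHom = rename Subtype.val from
      fun r => congr($this r)
    ext
    simp [e]
  have hdeg : (e q).natDegree ≠ 0 := by
    rw [show (e q).natDegree = q.degreeOf x from (degreeOf_eq_natDegree x q).symm,
      ← mem_vars_iff_degreeOf_ne_zero]
    by_contra hx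
    exact hq.ne_zero (hI q hqI hx)
  have hJ : (I.comap e.symm).comap Polynomial.C = ⊥ := by
    refine (Submodule.eq_bot_iff _).mpr fun r hr => rename_injective _ Subtype.val_injective ?_
    rw [Ideal.mem_comap, Ideal.mem_comap, he] at hr
    rw [hI _ hr, map_zero]
    intro hx
    obtain ⟨b, -, hb⟩ := mem_vars_rename _ _ hx
    exact b.2 hb
  rw [← map_dvd_iff e]
  exact Polynomial.dvd_of_mem_of_comap_C_eq_bot hJ ((MulEquiv.irreducible_iff e).mpr hq) hdeg
    (by simpa using hqI) (by simpa using hgI)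

end MvPolynomial

/-- If `P` is a prime ideal of `k[x_1,…,x_n]` and `C` is a set of variables
with `P ∩ k[C] ≠ ⟨0⟩` but `P ∩ k[C'] = ⟨0⟩` for all proper subsets `C' ⊊ C`, then
`P ∩ k[C]` is principal, generated by an irreducible polynomial `f_C` whose support
is all of `C`. -/
theorem circuit_polynomial {k : Type*} [Field k] {n : ℕ}
    (P : Ideal (MvPolynomial (Fin n) k)) (hP : P.IsPrime) (C : Set (Fin n))
    (hdep : ∃ f, f ∈ P ∧ f ∈ MvPolynomial.supported k C ∧ f ≠ 0)
    (hmin : ∀ C' ⊂ C, ∀ f ∈ P, f ∈ MvPolynomial.supported k C' → f = 0) :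
    ∃ fC : MvPolynomial (Fin n) k,
      fC ∈ P ∧ fC ∈ MvPolynomial.supported k C ∧ Irreducible fC ∧ (↑fC.vars : Set (Fin n)) = C ∧
      ∀ g ∈ P, g ∈ MvPolynomial.supported k C →
        ∃ h ∈ MvPolynomial.supported k C, g = fC * h := by
  classical
  obtain ⟨f, hfP, hfC, hf0⟩ := hdep
  have hvars : ∀ g ∈ P, g ∈ supported k C → g ≠ 0 → (↑g.vars : Set (Fin n)) = C :=
    fun g hgP hgC hg0 => (eq_or_ssubset_of_subset (mem_supported.mp hgC)).resolve_right
      fun hss => hg0 (hmin _ hss g hgP (mem_supported_vars g))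
  let ι := rename (R := k) (Subtype.val : C → Fin n)
  have hι : Function.Injective ι := rename_injective _ Subtype.val_injective
  have hrange : ∀ g, g ∈ supported k C ↔ ∃ g', ι g' = g := by
    simp [supported_eq_range_rename, ι]
  have hQ : ∀ x : C, ∀ r ∈ P.comap ι, x ∉ r.vars → r = 0 := by
    intro x r hr hx
    by_contra hr0
    refine hx ((mem_vars_rename_iff Subtype.val_injective).mp ?_)
    rw [← Finset.mem_coe, hvars _ hr ((hrange _).mpr ⟨r, rfl⟩) ((map_ne_zero_iff _ hι).mpr hr0)]
    exact x.2
  obtain ⟨f', rfl⟩ := (hrange f).mp hfC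
  obtain ⟨q, hqQ, hq⟩ := (hP.comap ι).exists_mem_prime_of_ne_bot
    fun hbot => hf0 (by rw [(Submodule.eq_bot_iff _).mp hbot f' hfP, map_zero])
  obtain ⟨x, -⟩ := vars_nonempty_of_not_isUnit hq.ne_zero hq.not_isUnit
  refine ⟨ι q, hqQ, (hrange _).mpr ⟨q, rfl⟩,
    irreducible_rename Subtype.val_injective hq.irreducible, hvars _ hqQ ((hrange _).mpr ⟨q, rfl⟩) ((map_ne_zero_iff _ hι).mpr hq.ne_zero), ?_⟩
  intro g hgP hgC
  obtain ⟨g', rfl⟩ := (hrange g).mp hgC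
  obtain ⟨h, rfl⟩ := dvd_of_mem_of_forall_mem_vars x (hQ x) hq.irreducible hqQ hgP
  exact ⟨ι h, (hrange _).mpr ⟨h, rfl⟩, map_mul ι q h⟩
end

section
/- Let k be a field and P a prime ideal in k[x_1,...,x_n]. The collection C_P of minimal subsets C of variables with P ∩ k[C] ≠ ⟨0⟩ satisfies the circuit elimination axiom: if C_1, C_2 ∈ C_P are distinct and x ∈ C_1 ∩ C_2, then there exists C_3 ∈ C_P with C_3 ⊆ (C_1 ∪ C_2) \ {x}. -/
/-!
`P ∩ k[S] = ⟨0⟩` says exactly that the residues of the variables `xᵢ`, `i ∈ S`, are algebraically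
independent over `k` in `k[x₁, …, xₙ] ⧸ P`. Since `P` is prime this quotient is a domain, where
algebraic independence is the independence notion of a matroid. Hence `C_P` is the set of circuits
of that matroid pulled back to the variables, and circuit elimination is a matroid axiom.
-/

open MvPolynomial

/-- `S` is independent modulo `P`, i.e. `P ∩ k[S] = ⟨0⟩`. -/
def IndepModP {k : Type*} [Field k] {n : ℕ} (P : Ideal (MvPolynomial (Fin n) k))
    (S : Set (Fin n)) : Prop :=
  ∀ f ∈ P, f ∈ MvPolynomial.supported k S → f = 0

/-- `C` is a circuit of the coordinate matroid of `P`: a minimal set of variables with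
`P ∩ k[C] ≠ ⟨0⟩`. -/
def CircuitModP {k : Type*} [Field k] {n : ℕ} (P : Ideal (MvPolynomial (Fin n) k))
    (C : Set (Fin n)) : Prop :=
  ¬ IndepModP P C ∧ ∀ C' ⊂ C, IndepModP P C'

theorem MvPolynomial.aeval_quotientMk_X {R σ : Type*} [CommRing R]
    (I : Ideal (MvPolynomial σ R)) (p : MvPolynomial σ R) :
    aeval (fun i ↦ Ideal.Quotient.mk I (X i)) p = Ideal.Quotient.mk I p := by
  have h : aeval (fun i ↦ Ideal.Quotient.mk I (X i)) = Ideal.Quotient.mkₐ R I :=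
    algHom_ext fun i ↦ by simp
  rw [h, Ideal.Quotient.mkₐ_eq_mk]

theorem AlgebraicIndependent.matroid_comap_indep_iff {R A ι : Type*} [CommRing R] [CommRing A]
    [Algebra R A] [FaithfulSMul R A] [NoZeroDivisors A] [Nontrivial R] (x : ι → A) (s : Set ι) :
    ((AlgebraicIndependent.matroid R A).comap x).Indep s ↔ AlgebraicIndepOn R x s := by
  rw [Matroid.comap_indep_iff, AlgebraicIndependent.matroid_indep_iff]
  exact ⟨fun ⟨hind, hinj⟩ ↦ (algebraicIndependent_image hinj).2 hind,
    fun h ↦ ⟨h.image, Set.injOn_iff_injective.2 h.injective⟩⟩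

section CoordinateMatroid

variable {k : Type*} [Field k] {n : ℕ} (P : Ideal (MvPolynomial (Fin n) k))

theorem indepModP_iff_algebraicIndepOn (S : Set (Fin n)) :
    IndepModP P S ↔ AlgebraicIndepOn k (fun i ↦ Ideal.Quotient.mk P (X i)) S := by
  refine Iff.trans ?_
    (algebraicIndependent_comp_subtype (x := fun i ↦ Ideal.Quotient.mk P (X i))).symm
  simp only [aeval_quotientMk_X, Ideal.Quotient.eq_zero_iff_mem]
  exact ⟨fun h p hS hP ↦ h p hP hS, fun h p hP hS ↦ h p hS hP⟩

noncomputable def coordinateMatroid [P.IsPrime] : Matroid (Fin n) :=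
  (AlgebraicIndependent.matroid k (MvPolynomial (Fin n) k ⧸ P)).comap
    fun i ↦ Ideal.Quotient.mk P (X i)

theorem coordinateMatroid_indep_iff [P.IsPrime] (S : Set (Fin n)) :
    (coordinateMatroid P).Indep S ↔ IndepModP P S := by
  rw [coordinateMatroid, AlgebraicIndependent.matroid_comap_indep_iff,
    indepModP_iff_algebraicIndepOn]

theorem circuitModP_iff_isCircuit [P.IsPrime] (C : Set (Fin n)) :
    CircuitModP P C ↔ (coordinateMatroid P).IsCircuit C := by
  simp only [Matroid.isCircuit_iff_forall_ssubset, Matroid.dep_iff, coordinateMatroid_indep_iff,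
    CircuitModP]
  exact ⟨fun ⟨hdep, hmin⟩ ↦ ⟨⟨hdep, Set.subset_univ C⟩, hmin⟩,
    fun ⟨⟨hdep, _⟩, hmin⟩ ↦ ⟨hdep, hmin⟩⟩

end CoordinateMatroid

theorem circuit_elimination_general {k : Type*} [Field k] {n : ℕ}
    (P : Ideal (MvPolynomial (Fin n) k)) (hP : P.IsPrime)
    (C₁ C₂ : Set (Fin n)) (hC₁ : CircuitModP P C₁) (hC₂ : CircuitModP P C₂)
    (hne : C₁ ≠ C₂) (x : Fin n) :
    ∃ C₃, CircuitModP P C₃ ∧ C₃ ⊆ (C₁ ∪ C₂) \ {x} := by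
  rw [circuitModP_iff_isCircuit] at hC₁ hC₂
  obtain ⟨C₃, hsub, hC₃⟩ := hC₁.elimination hC₂ hne x
  exact ⟨C₃, (circuitModP_iff_isCircuit P C₃).2 hC₃, hsub⟩

/-- The circuits of the coordinate matroid of a prime ideal satisfy the
circuit elimination axiom. -/
theorem circuit_elimination {k : Type*} [Field k] {n : ℕ}
    (P : Ideal (MvPolynomial (Fin n) k)) (hP : P.IsPrime)
    (C₁ C₂ : Set (Fin n)) (hC₁ : CircuitModP P C₁) (hC₂ : CircuitModP P C₂)
    (hne : C₁ ≠ C₂) (x : Fin n) (hx : x ∈ C₁ ∩ C₂) :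
    ∃ C₃, CircuitModP P C₃ ∧ C₃ ⊆ (C₁ ∪ C₂) \ {x} :=
  circuit_elimination_general P hP C₁ C₂ hC₁ hC₂ hne x
end
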